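/- arXiv:1801.04233 — 3 statements merged into one kernel-verified Lean document; each statement's English description precedes it below -/
import Mathlib

section
/- Let (W,S) be a Coxeter system and let I, J ⊆ S with I ∩ J = ∅ and m(s,t) ≤ 2 for all s ∈ I, t ∈ J (i.e., every element of I commutes with every element of J). Then the projections P^I and P^J commute: P^I(P^J(w)) = P^J(P^I(w)) for all w ∈ W. -/
open CoxeterSystem

variable {B W : Type*} [Group W] {M : CoxeterMatrix B}

/-- The standard parabolic subgroup `W_J`. -/
def CoxeterSystem.parabolic (cs : CoxeterSystem M W) (J : Set B) : Subgroup W :=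
  Subgroup.closure (cs.simple '' J)

/-- The set of minimal-length left coset representatives `W^J`. -/
def CoxeterSystem.minReps (cs : CoxeterSystem M W) (J : Set B) : Set W :=
  {w : W | ∀ s ∈ J, cs.length w < cs.length (w * cs.simple s)}

/-- `P` is the family of parabolic projections `P^J : W → W`, `w ↦ w^J`. -/
def CoxeterSystem.IsProjFamily (cs : CoxeterSystem M W) (P : Set B → W → W) : Prop :=
  ∀ (J : Set B) (w : W), P J w ∈ cs.minReps J ∧ (P J w)⁻¹ * w ∈ cs.parabolic J

/-!
Both `P^I (P^J w)` and `P^J (P^I w)` lie in the coset `w W_{I ∪ J}`. Since `W_I` commutes with the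
generators indexed by `J`, passing from `P^J w` to `P^I (P^J w)` cannot create a right descent in
`J`, so `P^I (P^J w)` has no right descent in `I ∪ J`; symmetrically for `P^J (P^I w)`. An element
without right descents in `K` is the minimal-length element of its coset modulo `W_K`, hence unique;
this rests on the exchange property, obtained from Tits's sign representation of `W` on `W × {±1}`.
-/

namespace CoxeterSystem

open List

variable (cs : CoxeterSystem M W)

local prefix:100 "σ" => cs.simple
local prefix:100 "π" => cs.wordProd
local prefix:100 "ℓ" => cs.length

section TitsSign

open scoped Classical

theorem simple_mul_mul_simple_eq_iff (i : B) (t x : W) :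
    σ i * t * σ i = x ↔ t = σ i * x * σ i := by
  constructor <;> rintro rfl <;> simp [mul_assoc]

noncomputable def titsPerm (i : B) : Equiv.Perm (W × ℤˣ) :=
  Function.Involutive.toPerm (fun x => (σ i * x.1 * σ i, if x.1 = σ i then -x.2 else x.2)) <| by
    rintro ⟨t, ε⟩
    simp only [simple_mul_mul_simple_eq_iff, simple_mul_simple_cancel_right]
    by_cases ht : t = σ i <;> simp [ht, mul_assoc]

theorem titsPerm_apply (i : B) (t : W) (ε : ℤˣ) :
    cs.titsPerm i (t, ε) = (σ i * t * σ i, if t = σ i then -ε else ε) := rfl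

def dihedralRefl (i j : B) (u : ℕ) : W := (σ j * σ i) ^ u * σ j

theorem titsPerm_mul_titsPerm_apply (i j : B) (t : W) (ε : ℤˣ) :
    (cs.titsPerm i * cs.titsPerm j) (t, ε) =
      (σ i * σ j * t * (σ i * σ j)⁻¹, ε * ((if t = cs.dihedralRefl i j 0 then -1 else 1) *
        (if t = cs.dihedralRefl i j 1 then -1 else 1))) := by
  have h1 : σ j * t * σ j = σ i ↔ t = cs.dihedralRefl i j 1 := by
    rw [simple_mul_mul_simple_eq_iff, dihedralRefl, pow_one]
  simp only [Equiv.Perm.mul_apply, titsPerm_apply, h1, mul_inv_rev, inv_simple, dihedralRefl,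
    pow_zero, one_mul]
  refine Prod.ext (by simp [mul_assoc]) ?_
  by_cases h0 : t = σ j <;> by_cases h1 : t = cs.dihedralRefl i j 1 <;> simp [h0, h1]

theorem titsPerm_mul_pow_apply (i j : B) (k : ℕ) (t : W) (ε : ℤˣ) :
    ((cs.titsPerm i * cs.titsPerm j) ^ k) (t, ε) =
      ((σ i * σ j) ^ k * t * ((σ i * σ j) ^ k)⁻¹,
        ε * ∏ u ∈ Finset.range (2 * k), if t = cs.dihedralRefl i j u then -1 else 1) := by
  induction k generalizing t ε with
  | zero => simp
  | succ k ih =>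
    have hconj (u : ℕ) :
        σ i * σ j * cs.dihedralRefl i j (u + 2) * (σ i * σ j)⁻¹ = cs.dihedralRefl i j u := by
      rw [dihedralRefl, dihedralRefl, pow_succ, pow_succ']
      simp [mul_assoc]
    have hshift (u : ℕ) :
        σ i * σ j * t * (σ i * σ j)⁻¹ = cs.dihedralRefl i j u ↔
          t = cs.dihedralRefl i j (u + 2) := by
      rw [← hconj, mul_left_inj, mul_right_inj]
    rw [pow_succ, Equiv.Perm.mul_apply, titsPerm_mul_titsPerm_apply, ih]
    refine Prod.ext ?_ ?_
    · simp only [pow_succ, mul_inv_rev, mul_assoc]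
    · simp only [hshift, Nat.mul_succ, Finset.prod_range_succ', zero_add]
      ac_rfl

theorem isLiftable_titsPerm : M.IsLiftable cs.titsPerm := by
  intro i j
  ext ⟨t, ε⟩ : 1
  have hperiod (u : ℕ) : cs.dihedralRefl i j (M i j + u) = cs.dihedralRefl i j u := by
    simp [dihedralRefl, pow_add, cs.simple_mul_simple_pow' i j]
  rw [titsPerm_mul_pow_apply, two_mul, Finset.prod_range_add]
  simp [hperiod, cs.simple_mul_simple_pow i j]

noncomputable def titsHom : W →* Equiv.Perm (W × ℤˣ) :=
  cs.lift ⟨cs.titsPerm, cs.isLiftable_titsPerm⟩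

theorem titsHom_wordProd (ω : List B) (t : W) (ε : ℤˣ) :
    cs.titsHom (π ω) (t, ε) =
      (π ω * t * (π ω)⁻¹, ε * (-1) ^ (cs.rightInvSeq ω).count t) := by
  induction ω generalizing ε with
  | nil => simp
  | cons i ω ih =>
    have hcond : π ω * t * (π ω)⁻¹ = σ i ↔ (π ω)⁻¹ * σ i * π ω = t := by
      rw [eq_comm, eq_mul_inv_iff_mul_eq, ← inv_mul_eq_iff_eq_mul, mul_assoc]
    rw [wordProd_cons, map_mul, Equiv.Perm.mul_apply, ih, titsHom, lift_apply_simple,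
      titsPerm_apply, rightInvSeq, count_cons]
    refine Prod.ext (by simp [mul_assoc]) ?_
    by_cases h : (π ω)⁻¹ * σ i * π ω = t <;> simp [hcond, h, pow_succ]

/-- The sign component of `titsHom (π ω) (t, 1)` depends only on `π ω`, hence so does the parity
of the number of occurrences of `t` in `rightInvSeq ω`; for a reduced word that number is `0` or
`1`. -/
theorem mem_rightInvSeq_of_wordProd_eq {ω ω' : List B} (hω : cs.IsReduced ω)
    (hω' : cs.IsReduced ω') (h : π ω = π ω') {t : W} (ht : t ∈ cs.rightInvSeq ω') :
    t ∈ cs.rightInvSeq ω := by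
  have hsign : (-1 : ℤˣ) ^ (cs.rightInvSeq ω).count t = (-1) ^ (cs.rightInvSeq ω').count t := by
    have h' := cs.titsHom_wordProd ω' t 1
    rw [← h, titsHom_wordProd] at h'
    simpa using congrArg Prod.snd h'
  rw [count_eq_one_of_mem hω'.nodup_rightInvSeq ht, hω.nodup_rightInvSeq.count] at hsign
  split_ifs at hsign with hmem
  · exact hmem
  · exact absurd hsign (by decide)

end TitsSign

theorem exists_wordProd_eraseIdx_eq_mul_simple {ω : List B} (hω : cs.IsReduced ω) {i : B}
    (h : ℓ (π ω * σ i) < ℓ (π ω)) :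
    ∃ j < ω.length, π (ω.eraseIdx j) = π ω * σ i := by
  obtain ⟨ω₁, hω₁, hπ₁⟩ := cs.exists_isReduced (π ω * σ i)
  have hπ : π (ω₁.concat i) = π ω := by
    rw [wordProd_concat, ← hπ₁, simple_mul_simple_cancel_right]
  have hred : cs.IsReduced (ω₁.concat i) := by
    rcases cs.length_mul_simple (π ω) i with _ | hlen
    · omega
    · rw [IsReduced, hπ, length_concat, ← hω₁.eq, ← hπ₁, hlen]
  have hmem : σ i ∈ cs.rightInvSeq ω :=
    cs.mem_rightInvSeq_of_wordProd_eq hω hred hπ.symm (by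
      rw [rightInvSeq_concat, concat_eq_append]
      exact mem_append_right _ (mem_singleton_self _))
  obtain ⟨j, hj, hget⟩ := List.mem_iff_getElem.mp hmem
  refine ⟨j, by simpa using hj, ?_⟩
  rw [← wordProd_mul_getD_rightInvSeq, getD_eq_getElem _ _ hj, hget]

theorem exists_reduced_sublist (ω : List B) :
    ∃ ω', ω' <+ ω ∧ cs.IsReduced ω' ∧ π ω' = π ω := by
  induction ω using List.reverseRecOn with
  | nil => exact ⟨[], Sublist.refl _, by simp [IsReduced], rfl⟩
  | append_singleton ω i ih =>
    obtain ⟨ω', hsub, hred, hπ⟩ := ih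
    rcases cs.length_mul_simple (π ω') i with hup | hdown
    · refine ⟨ω' ++ [i], hsub.append (Sublist.refl _), ?_, by simp [wordProd_append, hπ]⟩
      rw [IsReduced, wordProd_append, wordProd_singleton, hup, hred.eq, length_append,
        length_singleton]
    · obtain ⟨j, hj, hπj⟩ := cs.exists_wordProd_eraseIdx_eq_mul_simple hred (i := i) (by omega)
      refine ⟨ω'.eraseIdx j, (eraseIdx_sublist _ _).trans (hsub.trans (sublist_append_left _ _)),
        ?_, by simp [wordProd_append, hπj, hπ]⟩
      have := length_eraseIdx_add_one hj
      rw [IsReduced, hπj]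
      have := hred.eq
      omega

section Parabolic

variable {J : Set B}

theorem parabolic_mono {K : Set B} (h : J ⊆ K) : cs.parabolic J ≤ cs.parabolic K :=
  Subgroup.closure_mono (Set.image_mono h)

theorem simple_mem_parabolic {i : B} (hi : i ∈ J) : σ i ∈ cs.parabolic J :=
  Subgroup.subset_closure ⟨i, hi, rfl⟩

theorem mem_parabolic_iff {v : W} :
    v ∈ cs.parabolic J ↔ ∃ ω : List B, (∀ i ∈ ω, i ∈ J) ∧ π ω = v := by
  constructor
  · intro hv
    induction hv using Subgroup.closure_induction with
    | mem _ hx =>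
      obtain ⟨i, hi, rfl⟩ := hx
      exact ⟨[i], by simpa using hi, by simp⟩
    | one => exact ⟨[], by simp, by simp⟩
    | mul _ _ _ _ hx hy =>
      obtain ⟨ωx, hJx, rfl⟩ := hx
      obtain ⟨ωy, hJy, rfl⟩ := hy
      exact ⟨ωx ++ ωy, by simpa using fun i hi => hi.elim (hJx i) (hJy i), wordProd_append ..⟩
    | inv _ _ hx =>
      obtain ⟨ωx, hJx, rfl⟩ := hx
      exact ⟨ωx.reverse, by simpa using hJx, wordProd_reverse ..⟩
  · rintro ⟨ω, hJ, rfl⟩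
    induction ω with
    | nil => exact one_mem _
    | cons i ω ih =>
      rw [wordProd_cons]
      exact mul_mem (cs.simple_mem_parabolic (hJ i mem_cons_self))
        (ih fun k hk => hJ k (mem_cons_of_mem i hk))

theorem exists_reduced_word_of_mem_parabolic {v : W} (hv : v ∈ cs.parabolic J) :
    ∃ ω : List B, (∀ i ∈ ω, i ∈ J) ∧ cs.IsReduced ω ∧ π ω = v := by
  obtain ⟨ω, hJ, rfl⟩ := cs.mem_parabolic_iff.mp hv
  obtain ⟨ω', hsub, hred, hπ⟩ := cs.exists_reduced_sublist ω
  exact ⟨ω', fun i hi => hJ i (hsub.subset hi), hred, hπ⟩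

theorem exists_rightDescent_of_mem_parabolic {v : W} (hv : v ∈ cs.parabolic J) (hne : v ≠ 1) :
    ∃ i ∈ J, cs.IsRightDescent v i := by
  obtain ⟨ω, hJ, hred, rfl⟩ := cs.exists_reduced_word_of_mem_parabolic hv
  obtain rfl | ⟨ω', i, rfl⟩ := eq_nil_or_concat ω
  · exact absurd (wordProd_nil ..) hne
  refine ⟨i, hJ i (by simp), ?_⟩
  have := cs.length_wordProd_le ω'
  rw [IsRightDescent, wordProd_concat, simple_mul_simple_cancel_right, ← wordProd_concat,
    hred.eq, length_concat]
  omega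

theorem commute_of_mem_parabolic {x v : W} (h : ∀ i ∈ J, Commute (σ i) x)
    (hv : v ∈ cs.parabolic J) : Commute v x := by
  induction hv using Subgroup.closure_induction with
  | mem _ hy =>
    obtain ⟨i, hi, rfl⟩ := hy
    exact h i hi
  | one => exact Commute.one_left x
  | mul _ _ _ _ hy hz => exact hy.mul_left hz
  | inv _ _ hy => exact hy.inv_left

end Parabolic

section Cosets

variable {J : Set B}

theorem isReduced_append_of_forall_length_le {ω ω' : List B}
    (hmin : ∀ v ∈ cs.parabolic J, ℓ (π ω) ≤ ℓ (π ω * v)) (hω : cs.IsReduced ω)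
    (hω' : cs.IsReduced ω') (hJ : ∀ i ∈ ω', i ∈ J) : cs.IsReduced (ω ++ ω') := by
  induction ω' using List.reverseRecOn with
  | nil => simpa using hω
  | append_singleton ω' i ih =>
    have hred' : cs.IsReduced ω' := by simpa using hω'.take ω'.length
    have hred := ih hred' fun k hk => hJ k (mem_append_left _ hk)
    have hi : i ∈ J := hJ i (by simp)
    have hω'J : π ω' ∈ cs.parabolic J :=
      cs.mem_parabolic_iff.mpr ⟨ω', fun k hk => hJ k (mem_append_left _ hk), rfl⟩
    have hlen' : ℓ (π ω' * σ i) = ω'.length + 1 := by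
      simpa [IsReduced, wordProd_append] using hω'.eq
    rcases cs.length_mul_simple (π (ω ++ ω')) i with hup | hdown
    · rw [← append_assoc, IsReduced, wordProd_append, wordProd_singleton, hup, hred.eq]
      simp [add_assoc]
    exfalso
    obtain ⟨j, hj, hπ⟩ := cs.exists_wordProd_eraseIdx_eq_mul_simple hred (i := i) (by omega)
    rcases lt_or_ge j ω.length with hlt | hge
    · -- deleting a letter of `ω` would shorten `π ω` inside its coset
      rw [eraseIdx_append_of_lt_length hlt, wordProd_append, wordProd_append,
        ← eq_mul_inv_iff_mul_eq, mul_assoc, mul_assoc] at hπ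
      have hle := hmin _ (mul_mem hω'J (mul_mem (cs.simple_mem_parabolic hi) (inv_mem hω'J)))
      rw [← hπ, hω.eq] at hle
      have := cs.length_wordProd_le (ω.eraseIdx j)
      have := length_eraseIdx_add_one hlt
      omega
    · -- deleting a letter of `ω'` would shorten the reduced word `ω' ++ [i]`
      rw [eraseIdx_append_of_length_le hge, wordProd_append, wordProd_append, mul_assoc,
        mul_right_inj] at hπ
      have hle := cs.length_wordProd_le (ω'.eraseIdx (j - ω.length))
      rw [hπ, hlen'] at hle
      have := length_eraseIdx_add_one (l := ω') (i := j - ω.length) (by simp at hj; omega)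
      omega

theorem length_mul_of_forall_length_le {u : W}
    (hmin : ∀ v ∈ cs.parabolic J, ℓ u ≤ ℓ (u * v)) {v : W} (hv : v ∈ cs.parabolic J) :
    ℓ (u * v) = ℓ u + ℓ v := by
  obtain ⟨ω, hω, rfl⟩ := cs.exists_isReduced u
  obtain ⟨ω', hJ, hω', rfl⟩ := cs.exists_reduced_word_of_mem_parabolic hv
  rw [← wordProd_append, (cs.isReduced_append_of_forall_length_le hmin hω hω' hJ).eq, hω.eq,
    hω'.eq, length_append]

theorem exists_forall_length_le_mul (J : Set B) (w : W) :
    ∃ v ∈ cs.parabolic J, ∀ v' ∈ cs.parabolic J, ℓ (w * v) ≤ ℓ (w * v * v') := by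
  obtain ⟨v, hv, hmin⟩ := (InvImage.wf (fun v => ℓ (w * v)) wellFounded_lt).has_min
    (cs.parabolic J : Set W) ⟨1, one_mem _⟩
  refine ⟨v, hv, fun v' hv' => ?_⟩
  rw [mul_assoc]
  exact not_lt.mp (hmin _ (mul_mem hv hv'))

theorem forall_length_le_mul_of_mem_minReps {u : W} (hu : u ∈ cs.minReps J) :
    ∀ v ∈ cs.parabolic J, ℓ u ≤ ℓ (u * v) := by
  obtain ⟨v₀, hv₀, hmin⟩ := cs.exists_forall_length_le_mul J u
  obtain rfl | hne := eq_or_ne v₀ 1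
  · simpa using hmin
  -- otherwise a right descent `i ∈ J` of `v₀⁻¹` would be a right descent of `u = (u * v₀) * v₀⁻¹`
  obtain ⟨i, hi, hdesc⟩ :=
    cs.exists_rightDescent_of_mem_parabolic (inv_mem hv₀) (inv_ne_one.mpr hne)
  have h₁ := cs.length_mul_of_forall_length_le hmin (inv_mem hv₀)
  have h₂ := cs.length_mul_of_forall_length_le hmin
    (mul_mem (inv_mem hv₀) (cs.simple_mem_parabolic hi))
  rw [mul_inv_cancel_right] at h₁
  rw [← mul_assoc, mul_inv_cancel_right] at h₂
  have := hu i hi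
  rw [IsRightDescent] at hdesc
  omega

theorem length_mul_of_mem_minReps {u v : W} (hu : u ∈ cs.minReps J)
    (hv : v ∈ cs.parabolic J) : ℓ (u * v) = ℓ u + ℓ v :=
  cs.length_mul_of_forall_length_le (cs.forall_length_le_mul_of_mem_minReps hu) hv

theorem eq_of_mem_minReps {u₁ u₂ : W} (h₁ : u₁ ∈ cs.minReps J) (h₂ : u₂ ∈ cs.minReps J)
    (h : u₁⁻¹ * u₂ ∈ cs.parabolic J) : u₁ = u₂ := by
  have hlen := cs.length_mul_of_mem_minReps h₁ h
  have hle := cs.forall_length_le_mul_of_mem_minReps h₂ _ (inv_mem h)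
  rw [mul_inv_cancel_left] at hlen
  rw [mul_inv_rev, inv_inv, mul_inv_cancel_left] at hle
  have : ℓ (u₁⁻¹ * u₂) = 0 := by omega
  rwa [length_eq_zero_iff, inv_mul_eq_one] at this

end Cosets

/-- `a * σ t = (b * σ t) * (b⁻¹ * a)` for `t ∈ J`, so a descent `t` of `b` would be one of `a`. -/
theorem mem_minReps_union {I J : Set B} {a b : W} (ha : a ∈ cs.minReps J)
    (hb : b ∈ cs.minReps I) (hba : b⁻¹ * a ∈ cs.parabolic I)
    (hcomm : ∀ s ∈ I, ∀ t ∈ J, Commute (σ s) (σ t)) : b ∈ cs.minReps (I ∪ J) := by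
  rintro t (ht | ht)
  · exact hb t ht
  have hlen := cs.length_mul_of_mem_minReps hb hba
  rw [mul_inv_cancel_left] at hlen
  have hat : a * σ t = b * σ t * (b⁻¹ * a) := by
    rw [mul_assoc, ← (cs.commute_of_mem_parabolic (fun s hs => hcomm s hs t ht) hba).eq,
      ← mul_assoc, mul_inv_cancel_left]
  have := ha t ht
  have := cs.length_mul_le (b * σ t) (b⁻¹ * a)
  rw [← hat] at this
  omega

end CoxeterSystem

theorem stmt_3_general (cs : CoxeterSystem M W) (P : Set B → W → W) (hP : cs.IsProjFamily P)
    (I J : Set B)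
    (hcomm : ∀ s ∈ I, ∀ t ∈ J, Commute (cs.simple s) (cs.simple t)) (w : W) :
    P I (P J w) = P J (P I w) := by
  obtain ⟨hJw, hJw'⟩ := hP J w
  obtain ⟨hIJw, hIJw'⟩ := hP I (P J w)
  obtain ⟨hIw, hIw'⟩ := hP I w
  obtain ⟨hJIw, hJIw'⟩ := hP J (P I w)
  have hI := cs.parabolic_mono (Set.subset_union_left (s := I) (t := J))
  have hJ := cs.parabolic_mono (Set.subset_union_right (s := I) (t := J))
  refine cs.eq_of_mem_minReps (J := I ∪ J) (cs.mem_minReps_union hJw hIJw hIJw' hcomm) ?_ ?_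
  · rw [Set.union_comm]
    exact cs.mem_minReps_union hIw hJIw hJIw' fun t ht s hs => (hcomm s hs t ht).symm
  · have hprod : (P I (P J w))⁻¹ * P J (P I w) =
        (P I (P J w))⁻¹ * P J w * ((P J w)⁻¹ * w) * ((P I w)⁻¹ * w)⁻¹ *
          ((P J (P I w))⁻¹ * P I w)⁻¹ := by group
    rw [hprod]
    exact mul_mem (mul_mem (mul_mem (hI hIJw') (hJ hJw')) (inv_mem (hI hIw')))
      (inv_mem (hJ hJIw'))

theorem stmt_3 (cs : CoxeterSystem M W) (P : Set B → W → W) (hP : cs.IsProjFamily P)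
    (I J : Set B) (hdisj : I ∩ J = ∅)
    (hcomm : ∀ s ∈ I, ∀ t ∈ J, Commute (cs.simple s) (cs.simple t)) (w : W) :
    P I (P J w) = P J (P I w) :=
  stmt_3_general cs P hP I J hcomm w
end

section
/- Let (W,S) be a Coxeter system and let u, v ∈ W. For a reduced expression v = s₁s₂⋯s_k, define P^v := P^{{s₁}} ∘ P^{{s₂}} ∘ ⋯ ∘ P^{{s_k}} (composition of the one-generator projections). Then P^v(u) = e if and only if u ≤ v in the Bruhat order. -/
open CoxeterSystem

variable {B W : Type*} [Group W] {M : CoxeterMatrix B}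

/-- The projection `P^{{s}}` onto `W^{{s}}`: removes a trailing `s` if that shortens `w`. -/
noncomputable def CoxeterSystem.projSimple (cs : CoxeterSystem M W) (s : B) (w : W) : W :=
  if cs.length (w * cs.simple s) < cs.length w then w * cs.simple s else w

/-- For a word `ω = s₁ ⋯ s_k`, the composition `P^{{s₁}} ∘ ⋯ ∘ P^{{s_k}}`. -/
noncomputable def CoxeterSystem.projWord (cs : CoxeterSystem M W) (ω : List B) : W → W :=
  ω.foldr (fun s g => cs.projSimple s ∘ g) id

/-- The Bruhat order, via the subword property: `u ≤ v` iff some reduced word for `v`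
has a subword whose product is `u`. -/
def CoxeterSystem.bruhatLE (cs : CoxeterSystem M W) (u v : W) : Prop :=
  ∃ ω : List B, cs.IsReduced ω ∧ cs.wordProd ω = v ∧
    ∃ ω' : List B, ω'.Sublist ω ∧ cs.wordProd ω' = u

/-!
Each projection `P^{s}` at most removes a trailing `s`, so `P^ω u = 1` writes `u` as the product
of a subword of `ω`.

Conversely, work with the Bruhat order given by chains `x < x t` (`t` a reflection, length
increasing). Tits' action of `W` on `W × ZMod 2` shows that the parity of the number of
occurrences of a reflection `t` in the right inversion sequence of a word depends only on the
product of the word; this gives strong exchange. Strong exchange yields the lifting property by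
induction along chains, and lifting shows both that a subword of a reduced word lies below it and
that `x ≤ y`, `y s < y` imply `P^s x ≤ y s`. Peeling the letters of `ω` off from the right then
brings any `u ≤ π ω` down to `1`.
-/

namespace CoxeterSystem

open List

variable (cs : CoxeterSystem M W)

local prefix:100 "s" => cs.simple
local prefix:100 "π" => cs.wordProd
local prefix:100 "ℓ" => cs.length
local prefix:100 "ris" => cs.rightInvSeq
local prefix:100 "lis" => cs.leftInvSeq

theorem prod_map_alternatingWord_two_mul {G : Type*} [Monoid G] (f : B → G) (i j : B) (p : ℕ) :
    ((alternatingWord i j (2 * p)).map f).prod = (f i * f j) ^ p := by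
  induction p with
  | zero => simp [alternatingWord]
  | succ p ih =>
    rw [show 2 * (p + 1) = 2 * p + 1 + 1 by ring, alternatingWord_succ', alternatingWord_succ',
      if_neg (by simp [parity_simps]), if_pos (by simp), map_cons, map_cons, prod_cons, prod_cons,
      ih, pow_succ', mul_assoc]

theorem leftInvSeq_eq_map_rightInvSeq (ω : List B) :
    lis ω = (ris ω).map (MulAut.conj (π ω)) := by
  induction ω with
  | nil => simp
  | cons a ω ih =>
    simp only [leftInvSeq, rightInvSeq, ih, map_map, map_cons, wordProd_cons, MulAut.conj_apply]
    refine congr_arg₂ _ (by group) (map_congr_left fun t _ => ?_)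
    simp [mul_assoc]

theorem wordProd_alternatingWord_odd_periodic (i j : B) (k : ℕ) :
    π (alternatingWord j i (2 * (M i j + k) + 1)) = π (alternatingWord j i (2 * k + 1)) := by
  have hdiv (n : ℕ) : (2 * n + 1) / 2 = n := by omega
  simp only [prod_alternatingWord_eq_mul_pow, Nat.not_even_bit1, if_false, hdiv, pow_add,
    simple_mul_simple_pow', one_mul]

theorem wordProd_alternatingWord_two_mul (i j : B) : π (alternatingWord i j (2 * M i j)) = 1 := by
  rw [prod_alternatingWord_eq_mul_pow, if_pos (even_two_mul _),
    Nat.mul_div_cancel_left _ two_pos, simple_mul_simple_pow, one_mul]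

theorem simple_conj_eq_simple_iff (i : B) (t : W) : s i * t * s i = s i ↔ t = s i := by
  constructor
  · intro h
    simpa [mul_assoc] using congr_arg (fun x => s i * x * s i) h
  · rintro rfl
    simp

section Parity

variable [DecidableEq W]

theorem even_count_rightInvSeq_alternatingWord (i j : B) (t : W) :
    Even ((ris (alternatingWord i j (2 * M i j))).count t) := by
  have hlis : lis (alternatingWord i j (2 * M i j)) =
      (range (2 * M i j)).map fun k => π (alternatingWord j i (2 * k + 1)) :=
    ext_getElem (by simp) fun k hk _ => by
      rw [getElem_leftInvSeq_alternatingWord _ _ _ _ _ (by simpa using hk), getElem_map,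
        getElem_range]
  have hris : ris (alternatingWord i j (2 * M i j)) = lis (alternatingWord i j (2 * M i j)) := by
    simp [leftInvSeq_eq_map_rightInvSeq, wordProd_alternatingWord_two_mul]
  rw [hris, hlis, two_mul, range_add, map_append, count_append, map_map]
  simp only [Function.comp_def, wordProd_alternatingWord_odd_periodic]
  exact ⟨_, rfl⟩

def reflectionAction (i : B) (p : W × ZMod 2) : W × ZMod 2 :=
  (s i * p.1 * s i, p.2 + if p.1 = s i then 1 else 0)

theorem reflectionAction_involutive (i : B) : Function.Involutive (cs.reflectionAction i) := by
  rintro ⟨t, ε⟩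
  simp only [reflectionAction, simple_conj_eq_simple_iff, add_assoc, CharTwo.add_self_eq_zero,
    add_zero, Prod.mk.injEq, and_true]
  simp [mul_assoc]

def reflectionPerm (i : B) : Equiv.Perm (W × ZMod 2) :=
  (cs.reflectionAction_involutive i).toPerm

theorem prod_map_reflectionPerm_apply (ω : List B) (t : W) (ε : ZMod 2) :
    (ω.map cs.reflectionPerm).prod (t, ε) =
      (π ω * t * (π ω)⁻¹, ε + (ris ω).count t) := by
  induction ω generalizing ε with
  | nil => simp
  | cons a ω ih =>
    rw [map_cons, prod_cons, Equiv.Perm.mul_apply, ih]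
    simp only [reflectionPerm, Function.Involutive.coe_toPerm, reflectionAction, wordProd_cons,
      rightInvSeq, count_cons]
    refine Prod.ext (by simp only [mul_inv_rev, inv_simple]; group) ?_
    have hconj : π ω * t * (π ω)⁻¹ = s a ↔ (π ω)⁻¹ * s a * π ω = t := by
      constructor
      · rintro h; rw [← h]; group
      · rintro rfl; group
    simp only [hconj, beq_iff_eq]
    split_ifs <;> push_cast <;> ring

theorem isLiftable_reflectionPerm : M.IsLiftable cs.reflectionPerm := fun i j => by
  rw [← prod_map_alternatingWord_two_mul]
  ext ⟨t, ε⟩ : 1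
  obtain ⟨c, hc⟩ := cs.even_count_rightInvSeq_alternatingWord i j t
  simp [prod_map_reflectionPerm_apply, wordProd_alternatingWord_two_mul, hc,
    CharTwo.add_self_eq_zero]

def reflectionRep : W →* Equiv.Perm (W × ZMod 2) :=
  cs.lift ⟨cs.reflectionPerm, cs.isLiftable_reflectionPerm⟩

theorem reflectionRep_wordProd_apply (ω : List B) (t : W) (ε : ZMod 2) :
    cs.reflectionRep (π ω) (t, ε) = (π ω * t * (π ω)⁻¹, ε + (ris ω).count t) := by
  rw [← prod_map_reflectionPerm_apply]
  simp [wordProd, map_list_prod, reflectionRep, Function.comp_def, lift_apply_simple]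

/- The parity of the number of occurrences of `t` in the right inversion sequence of any word
for `w` (`inversionParity_wordProd`). -/
def inversionParity (w t : W) : ZMod 2 := (cs.reflectionRep w (t, 0)).2

theorem reflectionRep_apply (w t : W) (ε : ZMod 2) :
    cs.reflectionRep w (t, ε) = (w * t * w⁻¹, ε + cs.inversionParity w t) := by
  obtain ⟨ω, rfl⟩ := cs.wordProd_surjective w
  simp [inversionParity, reflectionRep_wordProd_apply]

theorem inversionParity_wordProd (ω : List B) (t : W) :
    cs.inversionParity (π ω) t = (ris ω).count t := by
  simp [inversionParity, reflectionRep_wordProd_apply]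

theorem inversionParity_mul (x y t : W) :
    cs.inversionParity (x * y) t =
      cs.inversionParity y t + cs.inversionParity x (y * t * y⁻¹) := by
  have h := cs.reflectionRep_apply (x * y) t 0
  rw [map_mul, Equiv.Perm.mul_apply, reflectionRep_apply, reflectionRep_apply] at h
  simpa using (congr_arg Prod.snd h).symm

theorem inversionParity_one (t : W) : cs.inversionParity 1 t = 0 := by
  simp [inversionParity]

theorem inversionParity_simple (i : B) : cs.inversionParity (s i) (s i) = 1 := by
  simpa using cs.inversionParity_wordProd [i] (s i)

variable {cs} in
theorem IsReflection.inversionParity_self {t : W} (ht : cs.IsReflection t) :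
    cs.inversionParity t t = 1 := by
  obtain ⟨x, j, rfl⟩ := ht
  have hinv := cs.inversionParity_mul x⁻¹ x (s j)
  rw [inv_mul_cancel, inversionParity_one] at hinv
  have hconj : x⁻¹ * (x * s j * x⁻¹) * x⁻¹⁻¹ = s j := by group
  rw [inversionParity_mul, inversionParity_mul, hconj, inversionParity_simple, inv_simple,
    simple_mul_simple_cancel_right]
  linear_combination -hinv

theorem mem_rightInvSeq_of_inversionParity_eq_one {ω : List B} {t : W}
    (h : cs.inversionParity (π ω) t = 1) : t ∈ ris ω := by
  rw [inversionParity_wordProd] at h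
  exact count_pos_iff.mp (Nat.pos_of_ne_zero fun h0 => by simp [h0] at h)

variable {cs} in
theorem IsRightInversion.inversionParity_eq_one {w t : W} (h : cs.IsRightInversion w t) :
    cs.inversionParity w t = 1 := by
  by_contra hne
  have h0 : cs.inversionParity w t = 0 := by
    generalize cs.inversionParity w t = a at hne
    revert a
    decide
  obtain ⟨ω, hω, hωw⟩ := cs.exists_isReduced (w * t)
  have h1 : cs.inversionParity (π ω) t = 1 := by
    rw [← hωw, inversionParity_mul, h.1.inversionParity_self, h.1.mul_self, one_mul, h.1.inv, h0,
      add_zero]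
  have hlt := (cs.isRightInversion_of_mem_rightInvSeq hω
    (cs.mem_rightInvSeq_of_inversionParity_eq_one h1)).2
  rw [← hωw, mul_assoc, h.1.mul_self, mul_one] at hlt
  exact lt_asymm h.2 hlt

end Parity

theorem exists_eraseIdx_eq_mul_of_isRightInversion (ω : List B) {t : W}
    (h : cs.IsRightInversion (π ω) t) : ∃ n < ω.length, π (ω.eraseIdx n) = π ω * t := by
  classical
  have hmem := cs.mem_rightInvSeq_of_inversionParity_eq_one h.inversionParity_eq_one
  obtain ⟨n, hn, rfl⟩ := getElem_of_mem hmem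
  refine ⟨n, by simpa using hn, ?_⟩
  rw [← wordProd_mul_getD_rightInvSeq, getD_eq_getElem _ _ hn]

theorem isReduced_append_singleton_iff (ω : List B) (i : B) :
    cs.IsReduced (ω ++ [i]) ↔ cs.IsReduced ω ∧ ℓ (π ω) < ℓ (π ω * s i) := by
  have hlen := cs.length_wordProd_le ω
  unfold IsReduced
  rw [wordProd_append, wordProd_singleton, length_append, length_singleton]
  rcases cs.length_mul_simple (π ω) i with h | h <;> omega

def BruhatStep (x y : W) : Prop := ∃ t, cs.IsReflection t ∧ x * t = y ∧ ℓ x < ℓ y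

-- The Bruhat order through chains of reflections, as opposed to the subword form `bruhatLE`.
def ChainLE : W → W → Prop := Relation.ReflTransGen cs.BruhatStep

variable {cs}

theorem BruhatStep.length_lt {x y : W} (h : cs.BruhatStep x y) : ℓ x < ℓ y := by
  obtain ⟨_, _, _, h⟩ := h
  exact h

theorem ChainLE.length_le {x y : W} (h : cs.ChainLE x y) : ℓ x ≤ ℓ y := by
  induction h with
  | refl => rfl
  | tail _ hstep ih => exact ih.trans hstep.length_lt.le

theorem bruhatStep_mul_simple {x : W} {i : B} (h : ℓ x < ℓ (x * s i)) :
    cs.BruhatStep x (x * s i) :=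
  ⟨s i, cs.isReflection_simple i, rfl, h⟩

theorem mul_simple_bruhatStep {x : W} {i : B} (h : ℓ (x * s i) < ℓ x) :
    cs.BruhatStep (x * s i) x :=
  ⟨s i, cs.isReflection_simple i, simple_mul_simple_cancel_right _ _, h⟩

theorem BruhatStep.mul_simple {x y : W} {i : B} (h : cs.BruhatStep x y)
    (hl : ℓ (x * s i) < ℓ (y * s i)) : cs.BruhatStep (x * s i) (y * s i) := by
  obtain ⟨t, ht, rfl, -⟩ := h
  refine ⟨s i * t * s i, by simpa using ht.conj (s i), ?_, hl⟩
  simp [mul_assoc]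

theorem bruhatStep_wordProd_eraseIdx {ω : List B} (hω : cs.IsReduced ω) {n : ℕ}
    (hn : n < ω.length) : cs.BruhatStep (π (ω.eraseIdx n)) (π ω) := by
  have hmem : (ris ω).getD n 1 ∈ ris ω := by
    rw [getD_eq_getElem _ _ (by simpa using hn)]
    exact getElem_mem _
  obtain ⟨ht, hlt⟩ := cs.isRightInversion_of_mem_rightInvSeq hω hmem
  rw [wordProd_mul_getD_rightInvSeq] at hlt
  refine ⟨_, ht, ?_, hlt⟩
  rw [← wordProd_mul_getD_rightInvSeq, mul_assoc, ht.mul_self, mul_one]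

-- Strong exchange in a word for `w` ending with `i`.
theorem BruhatStep.eq_mul_simple_or_mul_simple {u w : W} (h : cs.BruhatStep u w) (i : B) :
    u = w * s i ∨ cs.BruhatStep (u * s i) (w * s i) := by
  obtain ⟨t, ht, hut, hlt⟩ := h
  obtain rfl : u = w * t := by rw [← hut, mul_assoc, ht.mul_self, mul_one]
  obtain ⟨ω, hω, hωw⟩ := cs.exists_isReduced (w * s i)
  have hprod : π (ω ++ [i]) = w := by simp [← hωw, wordProd_append]
  have hinv : cs.IsRightInversion (π (ω ++ [i])) t := hprod ▸ ⟨ht, hlt⟩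
  obtain ⟨n, hn, hn'⟩ := cs.exists_eraseIdx_eq_mul_of_isRightInversion _ hinv
  rw [hprod] at hn'
  rw [length_append, length_singleton] at hn
  rcases (Nat.lt_succ_iff.1 hn).lt_or_eq with hn | rfl
  · right
    rw [eraseIdx_append_of_lt_length hn, wordProd_append, wordProd_singleton] at hn'
    rw [← hn', simple_mul_simple_cancel_right, hωw]
    exact bruhatStep_wordProd_eraseIdx hω hn
  · left
    simpa [eraseIdx_append_of_length_le, ← hωw] using hn'.symm

theorem BruhatStep.mul_simple_chainLE {u w : W} {i : B} (h : cs.BruhatStep u w)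
    (hw : ℓ (w * s i) < ℓ w) : cs.ChainLE (u * s i) w := by
  rcases h.eq_mul_simple_or_mul_simple i with rfl | h'
  · rw [simple_mul_simple_cancel_right]
    exact .refl
  · exact .tail (.single h') (mul_simple_bruhatStep hw)

theorem BruhatStep.chainLE_mul_simple {u w : W} {i : B} (h : cs.BruhatStep u w)
    (hu : ℓ u < ℓ (u * s i)) : cs.ChainLE u (w * s i) := by
  rcases h.eq_mul_simple_or_mul_simple i with rfl | h'
  · exact .refl
  · exact .tail (.single (bruhatStep_mul_simple hu)) h'

-- The three statements are proved together: each inductive step uses the others.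
theorem ChainLE.lift_simple {x y : W} (h : cs.ChainLE x y) (i : B) :
    (ℓ (y * s i) < ℓ y → cs.ChainLE (x * s i) y) ∧
    (ℓ y < ℓ (y * s i) → cs.ChainLE (x * s i) (y * s i)) ∧
    (ℓ (y * s i) < ℓ y → ℓ x < ℓ (x * s i) → cs.ChainLE x (y * s i)) := by
  induction h with
  | refl =>
    exact ⟨fun hx => .single (mul_simple_bruhatStep hx), fun _ => .refl,
      fun h₁ h₂ => absurd h₁ (lt_asymm h₂)⟩
  | @tail y' y hxy' hstep ih =>
    obtain ⟨ih₁, ih₂, ih₃⟩ := ih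
    have := hstep.length_lt
    have := cs.length_mul_simple y i
    have := cs.length_mul_simple y' i
    rcases (cs.length_mul_simple_ne y' i).lt_or_gt with hy' | hy'
    · have hxy : cs.ChainLE (x * s i) y := (ih₁ hy').tail hstep
      exact ⟨fun _ => hxy, fun hy => hxy.tail (bruhatStep_mul_simple hy),
        fun _ hx => (ih₃ hy' hx).tail (hstep.mul_simple (by omega))⟩
    · exact ⟨fun hy => (ih₂ hy').trans (hstep.mul_simple_chainLE hy),
        fun _ => (ih₂ hy').tail (hstep.mul_simple (by omega)),
        fun _ _ => hxy'.trans (hstep.chainLE_mul_simple hy')⟩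

theorem ChainLE.mul_simple {x y : W} {i : B} (h : cs.ChainLE x y) (hy : ℓ y < ℓ (y * s i)) :
    cs.ChainLE (x * s i) (y * s i) :=
  (h.lift_simple i).2.1 hy

theorem ChainLE.le_mul_simple {x y : W} {i : B} (h : cs.ChainLE x y) (hy : ℓ (y * s i) < ℓ y)
    (hx : ℓ x < ℓ (x * s i)) : cs.ChainLE x (y * s i) :=
  (h.lift_simple i).2.2 hy hx

theorem ChainLE.projSimple_le {x y : W} {i : B} (h : cs.ChainLE x y) (hy : ℓ (y * s i) < ℓ y) :
    cs.ChainLE (cs.projSimple i x) (y * s i) := by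
  unfold projSimple
  split_ifs with hx
  · have hxy : cs.ChainLE (x * s i) y := .head (mul_simple_bruhatStep hx) h
    exact hxy.le_mul_simple hy (by rwa [simple_mul_simple_cancel_right])
  · exact h.le_mul_simple hy ((not_lt.1 hx).lt_of_ne (cs.length_mul_simple_ne x i).symm)

theorem chainLE_wordProd_of_sublist {ω σ : List B} (hω : cs.IsReduced ω) (h : σ <+ ω) :
    cs.ChainLE (π σ) (π ω) := by
  induction ω using List.reverseRecOn generalizing σ with
  | nil =>
    rw [sublist_nil.1 h]
    exact .refl
  | append_singleton ω a ih =>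
    obtain ⟨hω', hlt⟩ := (cs.isReduced_append_singleton_iff ω a).1 hω
    obtain ⟨σ, τ, rfl, hσ, hτ⟩ := sublist_append_iff.1 h
    rw [wordProd_append, wordProd_append, wordProd_singleton]
    rcases sublist_singleton.1 hτ with rfl | rfl
    · rw [wordProd_nil, mul_one]
      exact (ih hω' hσ).tail (bruhatStep_mul_simple hlt)
    · rw [wordProd_singleton]
      exact (ih hω' hσ).mul_simple hlt

variable (cs) in
theorem projWord_append_singleton (ω : List B) (i : B) (u : W) :
    cs.projWord (ω ++ [i]) u = cs.projWord ω (cs.projSimple i u) := by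
  induction ω with
  | nil => rfl
  | cons a ω ih => exact congr_arg (cs.projSimple a) ih

theorem projWord_eq_one_of_chainLE {ω : List B} (hω : cs.IsReduced ω) {u : W}
    (h : cs.ChainLE u (π ω)) : cs.projWord ω u = 1 := by
  induction ω using List.reverseRecOn generalizing u with
  | nil =>
    show u = 1
    simpa [cs.length_eq_zero_iff] using h.length_le
  | append_singleton ω i ih =>
    obtain ⟨hω', hlt⟩ := (cs.isReduced_append_singleton_iff ω i).1 hω
    rw [wordProd_append, wordProd_singleton] at h
    rw [projWord_append_singleton]
    exact ih hω' (by simpa using h.projSimple_le (i := i) (by simpa using hlt))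

variable (cs) in
theorem exists_sublist_projWord_mul_wordProd_eq (ω : List B) (u : W) :
    ∃ σ, σ <+ ω ∧ cs.projWord ω u * π σ = u := by
  induction ω with
  | nil => exact ⟨[], .refl _, by simp [projWord]⟩
  | cons a ω ih =>
    obtain ⟨σ, hσ, hσu⟩ := ih
    by_cases ha : ℓ (cs.projWord ω u * s a) < ℓ (cs.projWord ω u)
    · refine ⟨a :: σ, hσ.cons_cons a, ?_⟩
      change cs.projSimple a (cs.projWord ω u) * _ = u
      rw [projSimple, if_pos ha, wordProd_cons, mul_assoc, simple_mul_simple_cancel_left, hσu]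
    · refine ⟨σ, hσ.cons a, ?_⟩
      change cs.projSimple a (cs.projWord ω u) * _ = u
      rw [projSimple, if_neg ha, hσu]

end CoxeterSystem

theorem stmt_8 (cs : CoxeterSystem M W) (u v : W)
    (ω : List B) (hred : cs.IsReduced ω) (hprod : cs.wordProd ω = v) :
    cs.projWord ω u = 1 ↔ cs.bruhatLE u v := by
  constructor
  · intro h
    obtain ⟨σ, hσ, hσu⟩ := cs.exists_sublist_projWord_mul_wordProd_eq ω u
    rw [h, one_mul] at hσu
    exact ⟨ω, hred, hprod, σ, hσ, hσu⟩
  · rintro ⟨ω', hω', rfl, σ, hσ, rfl⟩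
    exact cs.projWord_eq_one_of_chainLE hred (hprod ▸ cs.chainLE_wordProd_of_sublist hω' hσ)
end

section
/- Let (W,S) be a Coxeter system, s, t ∈ S with m(s,t) = m finite. If m is even, then (P^{{s}}P^{{t}})^{m/2} = (P^{{t}}P^{{s}})^{m/2} as functions W → W; if m is odd, then P^{{t}}(P^{{s}}P^{{t}})^{(m-1)/2} = P^{{s}}(P^{{t}}P^{{s}})^{(m-1)/2}. In other words, the one-generator projections satisfy the braid relations of the Coxeter monoid. -/
open CoxeterSystem

variable {B W : Type*} [Group W] {M : CoxeterMatrix B}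

/-! Write `w = u * π β` with `u` of minimal length in the coset `w W_{s,t}`, `β` a word in `s, t`
and `ℓ w = ℓ u + |β|`. By the strong exchange condition (proved with the reflection cocycle, as
in Björner–Brenti), `P^{{s}}` and `P^{{t}}` act on such a `w` by deleting a letter of `β` or not
at all. After the first projection `β` has to alternate and be shorter than `m(s,t)`, since an
alternating word of length `m(s,t)` has both letters as right descents; the remaining
`m(s,t) - 1` projections then strip it letter by letter. So both sides of the braid relation send
`w` to `u`. -/

open List

def conjArgAut (G : Type*) [Group G] : W →* MulAut (W → G) where
  toFun w :=
    { toFun := fun f t => f (w⁻¹ * t * w)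
      invFun := fun f t => f (w * t * w⁻¹)
      left_inv := fun f => by simp [mul_assoc]
      right_inv := fun f => by simp [mul_assoc]
      map_mul' := fun _ _ => rfl }
  map_one' := by ext; simp
  map_mul' _ _ := by ext; simp [mul_assoc]

theorem conjArgAut_apply {G : Type*} [Group G] (w : W) (f : W → G) (t : W) :
    conjArgAut G w f t = f (w⁻¹ * t * w) := rfl

theorem conjArgAut_mulSingle {G : Type*} [Group G] [DecidableEq W] (w r : W) (x : G) :
    conjArgAut G w (Pi.mulSingle r x) = Pi.mulSingle (w * r * w⁻¹) x := by
  funext t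
  simp only [conjArgAut_apply, Pi.mulSingle_apply]
  congr 1
  apply propext
  constructor <;> rintro rfl <;> group

namespace CoxeterSystem

variable (cs : CoxeterSystem M W)

local prefix:100 "s" => cs.simple
local prefix:100 "π" => cs.wordProd
local prefix:100 "ℓ" => cs.length
local prefix:100 "lis" => cs.leftInvSeq

theorem alternatingWord_two_mul_succ (i i' : B) (n : ℕ) :
    alternatingWord i i' (2 * (n + 1)) = i :: i' :: alternatingWord i i' (2 * n) := by
  rw [mul_add, mul_one, alternatingWord_succ', alternatingWord_succ']
  simp

theorem forall_mem_alternatingWord {I : Set B} {a b : B} (ha : a ∈ I) (hb : b ∈ I) (n : ℕ) :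
    ∀ x ∈ alternatingWord a b n, x ∈ I := by
  induction n generalizing a b with
  | zero => simp [alternatingWord]
  | succ n ih =>
    intro x hx
    rw [alternatingWord_succ, concat_eq_append, mem_append, mem_singleton] at hx
    exact hx.elim (ih hb ha x) (· ▸ hb)

theorem leftInvSeq_alternatingWord_two_mul (i i' : B) (n : ℕ) :
    lis (alternatingWord i i' (2 * n)) = (range (2 * n)).map fun k => s i * (s i' * s i) ^ k := by
  refine ext_getElem (by simp) fun k hk _ => ?_
  rw [cs.getElem_leftInvSeq_alternatingWord i i' n k (by simpa using hk),
    prod_alternatingWord_eq_mul_pow]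
  simp [Nat.not_even_bit1, Nat.mul_add_div]

section ReflectionCocycle

variable [DecidableEq W]

def cocycleGen (i : B) : (W → ℤˣ) ⋊[conjArgAut ℤˣ] W := ⟨Pi.mulSingle (s i) (-1), s i⟩

theorem prod_map_cocycleGen (ω : List B) :
    (ω.map cs.cocycleGen).prod = ⟨((lis ω).map (Pi.mulSingle · (-1))).prod, π ω⟩ := by
  induction ω with
  | nil => rfl
  | cons i ω ih =>
    rw [map_cons, prod_cons, ih, wordProd_cons]
    ext1
    · change Pi.mulSingle (s i) (-1) * conjArgAut ℤˣ (s i) _ = _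
      rw [map_list_prod, map_map, leftInvSeq, map_cons, prod_cons, map_map]
      refine congrArg (_ * prod ·) (map_congr_left fun r _ => ?_)
      simp [conjArgAut_mulSingle, cs.inv_simple]
    · rfl

theorem cocycleGen_mul_pow (i i' : B) (n : ℕ) :
    (cs.cocycleGen i * cs.cocycleGen i') ^ n =
      ((alternatingWord i i' (2 * n)).map cs.cocycleGen).prod := by
  induction n with
  | zero => rfl
  | succ n ih => rw [pow_succ', ih, alternatingWord_two_mul_succ]; simp [mul_assoc]

/-- The reflections `s i (s i' s i)^k` of `lis (alternatingWord i i' (2 * M i i'))` are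
`M i i'`-periodic in `k`, so each occurs an even number of times. -/
theorem isLiftable_cocycleGen : M.IsLiftable cs.cocycleGen := by
  intro i i'
  rw [cocycleGen_mul_pow, prod_map_cocycleGen, leftInvSeq_alternatingWord_two_mul, two_mul,
    range_add, map_append, map_map]
  have hperiod : ∀ k, s i * (s i' * s i) ^ (M i i' + k) = s i * (s i' * s i) ^ k := by
    intro k; rw [pow_add, simple_mul_simple_pow', one_mul]
  simp only [Function.comp_def, hperiod, map_append, prod_append]
  ext1
  · funext t; simp [Int.units_mul_self]
  · rw [← two_mul, prod_alternatingWord_eq_mul_pow]; simp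

/-- `(reflectionCocycle w).left t = -1` iff `t` occurs an odd number of times in the left inversion
sequence of some, equivalently every, word for `w`. -/
def reflectionCocycle : W →* (W → ℤˣ) ⋊[conjArgAut ℤˣ] W :=
  cs.lift ⟨cs.cocycleGen, cs.isLiftable_cocycleGen⟩

theorem reflectionCocycle_wordProd (ω : List B) :
    cs.reflectionCocycle (π ω) = ⟨((lis ω).map (Pi.mulSingle · (-1))).prod, π ω⟩ := by
  rw [← prod_map_cocycleGen, wordProd, map_list_prod, map_map]
  congr 2
  funext i
  exact cs.lift_apply_simple cs.isLiftable_cocycleGen i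

theorem reflectionCocycle_right (w : W) : (cs.reflectionCocycle w).right = w := by
  obtain ⟨ω, rfl⟩ := cs.wordProd_surjective w
  rw [reflectionCocycle_wordProd]

theorem reflectionCocycle_left_mul (v w t : W) :
    (cs.reflectionCocycle (v * w)).left t =
      (cs.reflectionCocycle v).left t * (cs.reflectionCocycle w).left (v⁻¹ * t * v) := by
  rw [map_mul, SemidirectProduct.mul_left, reflectionCocycle_right]
  rfl

theorem reflectionCocycle_left_eq_one {ω : List B} {t : W} (ht : t ∉ lis ω) :
    (cs.reflectionCocycle (π ω)).left t = 1 := by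
  rw [reflectionCocycle_wordProd]
  change ((lis ω).map (Pi.mulSingle · (-1))).prod t = 1
  rw [Pi.list_prod_apply]
  refine prod_eq_one fun x hx => ?_
  obtain ⟨r, hr, rfl⟩ := mem_map.mp ((map_map ..) ▸ hx)
  exact Pi.mulSingle_eq_of_ne (by rintro rfl; exact ht hr) _

theorem reflectionCocycle_left_self {t : W} (ht : cs.IsReflection t) :
    (cs.reflectionCocycle t).left t = -1 := by
  obtain ⟨u, i, rfl⟩ := ht
  have hcancel := cs.reflectionCocycle_left_mul u u⁻¹ (u * s i * u⁻¹)
  have hsimple : (cs.reflectionCocycle (s i)).left (s i) = -1 := by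
    simpa using congrArg (·.left (s i)) (cs.reflectionCocycle_wordProd [i])
  rw [mul_inv_cancel, map_one, SemidirectProduct.one_left] at hcancel
  have hconj : u⁻¹ * (u * s i * u⁻¹) * u = s i := by group
  have hconj' : (u * s i)⁻¹ * (u * s i * u⁻¹) * (u * s i) = s i := by group
  rw [hconj] at hcancel
  rw [reflectionCocycle_left_mul, reflectionCocycle_left_mul, hconj, hconj', hsimple, mul_neg_one,
    neg_mul, ← hcancel, Pi.one_apply]

theorem reflectionCocycle_left_of_isLeftInversion {v t : W} (ht : cs.IsLeftInversion v t) :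
    (cs.reflectionCocycle v).left t = -1 := by
  have hstay : (cs.reflectionCocycle (t * v)).left t = 1 := by
    obtain ⟨ω, hω, hωv⟩ := cs.exists_isReduced (t * v)
    rw [hωv]
    refine cs.reflectionCocycle_left_eq_one fun hmem => ?_
    exact ht.1.not_isLeftInversion_mul_right_iff.mpr ht
      (hωv ▸ cs.isLeftInversion_of_mem_leftInvSeq hω hmem)
  have := cs.reflectionCocycle_left_mul t (t * v) t
  rw [← mul_assoc, ht.1.mul_self, one_mul, inv_mul_cancel, one_mul, hstay, mul_one,
    reflectionCocycle_left_self cs ht.1] at this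
  exact this

end ReflectionCocycle

theorem mem_leftInvSeq_of_isLeftInversion {ω : List B} {t : W}
    (ht : cs.IsLeftInversion (π ω) t) : t ∈ lis ω := by
  classical
  by_contra hmem
  have := (cs.reflectionCocycle_left_of_isLeftInversion ht).symm.trans
    (cs.reflectionCocycle_left_eq_one hmem)
  exact absurd this (by decide)

theorem mem_rightInvSeq_of_isRightInversion {ω : List B} {t : W}
    (ht : cs.IsRightInversion (π ω) t) : t ∈ cs.rightInvSeq ω := by
  have : t ∈ lis ω.reverse := cs.mem_leftInvSeq_of_isLeftInversion <| by
    rwa [wordProd_reverse, isLeftInversion_inv_iff]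
  simpa [leftInvSeq_reverse] using this

theorem exists_eraseIdx_of_isRightInversion {ω : List B} {t : W}
    (ht : cs.IsRightInversion (π ω) t) : ∃ j < ω.length, π ω * t = π (ω.eraseIdx j) := by
  obtain ⟨j, hj, rfl⟩ := mem_iff_getElem.mp (cs.mem_rightInvSeq_of_isRightInversion ht)
  refine ⟨j, by simpa using hj, ?_⟩
  rw [← wordProd_mul_getD_rightInvSeq, getD_eq_getElem]

def IsMinimalInLeftCoset (I : Set B) (u : W) : Prop :=
  ∀ γ : List B, (∀ i ∈ γ, i ∈ I) → ℓ u ≤ ℓ (u * π γ)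

theorem length_mul_wordProd_le (u : W) (β : List B) : ℓ (u * π β) ≤ ℓ u + β.length :=
  (cs.length_mul_le u (π β)).trans (Nat.add_le_add_left (cs.length_wordProd_le β) _)

theorem length_mul_wordProd_of_append {u : W} {β γ : List B}
    (h : ℓ (u * π (β ++ γ)) = ℓ u + (β ++ γ).length) : ℓ (u * π β) = ℓ u + β.length := by
  have h₁ := cs.length_mul_wordProd_le (u * π β) γ
  have h₂ := cs.length_mul_wordProd_le u β
  rw [wordProd_append, ← mul_assoc, length_append] at h
  omega

theorem isRightDescent_mul_wordProd_append_singleton {u : W} {β : List B} {i : B}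
    (h : ℓ (u * π (β ++ [i])) = ℓ u + (β ++ [i]).length) :
    cs.IsRightDescent (u * π (β ++ [i])) i := by
  have hβ := cs.length_mul_wordProd_le u β
  have hcancel : u * π (β ++ [i]) * s i = u * π β := by
    rw [wordProd_append, wordProd_singleton, ← mul_assoc, simple_mul_simple_cancel_right]
  rw [IsRightDescent, hcancel, h, length_append, length_singleton]
  omega

/-- By minimality of `u`, the letter deleted by the exchange condition lies in `β`. -/
theorem IsMinimalInLeftCoset.exists_eraseIdx {I : Set B} {u : W}
    (hu : cs.IsMinimalInLeftCoset I u) {β : List B} (hβ : ∀ i ∈ β, i ∈ I) {i : B} (hi : i ∈ I)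
    (hdesc : cs.IsRightDescent (u * π β) i) :
    ∃ j < β.length, u * π β * s i = u * π (β.eraseIdx j) := by
  obtain ⟨ω, hω, rfl⟩ := cs.exists_isReduced u
  rw [← wordProd_append] at hdesc ⊢
  obtain ⟨j, hj, hexch⟩ := cs.exists_eraseIdx_of_isRightInversion
    ((cs.isRightInversion_simple_iff_isRightDescent _ _).mpr hdesc)
  rcases lt_or_ge j ω.length with hjω | hjω
  · exfalso
    rw [eraseIdx_append_of_lt_length hjω, cs.wordProd_append (ω.eraseIdx j)] at hexch
    have hshorter : π ω * π (β ++ [i] ++ β.reverse) = π (ω.eraseIdx j) := by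
      calc π ω * π (β ++ [i] ++ β.reverse) = π (ω ++ β) * s i * (π β)⁻¹ := by
            simp only [wordProd_append, wordProd_singleton, wordProd_reverse, mul_assoc]
        _ = π (ω.eraseIdx j) := by rw [hexch, mul_inv_cancel_right]
    have hle := hu (β ++ [i] ++ β.reverse) fun x hx => by
      simp only [mem_append, mem_singleton, mem_reverse] at hx
      rcases hx with (hx | rfl) | hx
      exacts [hβ x hx, hi, hβ x hx]
    have := cs.length_wordProd_le (ω.eraseIdx j)
    have := length_eraseIdx_add_one hjω
    rw [hshorter, hω.eq] at hle
    omega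
  · refine ⟨j - ω.length, by rw [length_append] at hj; omega, ?_⟩
    rw [hexch, eraseIdx_append_of_length_le hjω, wordProd_append]

theorem IsMinimalInLeftCoset.length_mul_wordProd {I : Set B} {u : W}
    (hu : cs.IsMinimalInLeftCoset I u) {β : List B} (hβ : ∀ i ∈ β, i ∈ I)
    (hmin : ∀ γ : List B, (∀ i ∈ γ, i ∈ I) → π γ = π β → β.length ≤ γ.length) :
    ℓ (u * π β) = ℓ u + β.length := by
  induction β using List.reverseRecOn with
  | nil => simp
  | append_singleton β x ih =>
    have hβ' : ∀ i ∈ β, i ∈ I := fun i hi => hβ i (mem_append_left _ hi)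
    have hx : x ∈ I := hβ x (by simp)
    have hmin' : ∀ γ : List B, (∀ i ∈ γ, i ∈ I) → π γ = π β → β.length ≤ γ.length := by
      intro γ hγ heq
      have := hmin (γ ++ [x]) (by simpa [or_imp, forall_and] using ⟨hγ, hx⟩)
        (by rw [wordProd_append, wordProd_append, heq])
      simpa using this
    rw [wordProd_append, wordProd_singleton, ← mul_assoc, length_append, length_singleton,
      ← add_assoc, ← ih hβ' hmin']
    refine cs.not_isRightDescent_iff.mp fun hdesc => ?_
    obtain ⟨j, hj, hexch⟩ := hu.exists_eraseIdx cs hβ' hx hdesc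
    have hshorter := hmin (β.eraseIdx j) (fun i hi => hβ' i (mem_of_mem_eraseIdx hi)) <| by
      rw [wordProd_append, wordProd_singleton]
      exact (mul_left_cancel ((mul_assoc ..).symm.trans hexch)).symm
    have := length_eraseIdx_add_one hj
    simp only [length_append, length_singleton] at hshorter
    omega

theorem exists_isMinimalInLeftCoset_mul (I : Set B) (w : W) :
    ∃ u β, cs.IsMinimalInLeftCoset I u ∧ (∀ i ∈ β, i ∈ I) ∧
      ℓ (u * π β) = ℓ u + β.length ∧ w = u * π β := by
  obtain ⟨_, ⟨γ, hγ, rfl⟩, hγmin⟩ := (measure cs.length).wf.has_min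
    {v | ∃ γ : List B, (∀ i ∈ γ, i ∈ I) ∧ w * π γ = v} ⟨w, [], by simp, by simp⟩
  have hu : cs.IsMinimalInLeftCoset I (w * π γ) := fun δ hδ =>
    not_lt.mp <| hγmin _ ⟨γ ++ δ, fun x hx => (mem_append.mp hx).elim (hγ x) (hδ x), by
      rw [wordProd_append, mul_assoc]⟩
  obtain ⟨β, ⟨hβ, hβγ⟩, hβmin⟩ := (measure List.length).wf.has_min
    {β | (∀ i ∈ β, i ∈ I) ∧ π β = π γ.reverse} ⟨γ.reverse, by simpa using hγ, rfl⟩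
  refine ⟨w * π γ, β, hu, hβ, hu.length_mul_wordProd cs hβ fun δ hδ hδβ =>
    not_lt.mp (hβmin δ ⟨hδ, hδβ.trans hβγ⟩), ?_⟩
  rw [hβγ, wordProd_reverse, mul_inv_cancel_right]

theorem projSimple_of_isRightDescent {w : W} {i : B} (h : cs.IsRightDescent w i) :
    cs.projSimple i w = w * s i :=
  if_pos h

theorem projSimple_of_not_isRightDescent {w : W} {i : B} (h : ¬cs.IsRightDescent w i) :
    cs.projSimple i w = w :=
  if_neg h

theorem projWord_singleton (i : B) : cs.projWord [i] = cs.projSimple i := rfl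

theorem projWord_append (ω ω' : List B) :
    cs.projWord (ω ++ ω') = cs.projWord ω ∘ cs.projWord ω' := by
  induction ω with
  | nil => rfl
  | cons i ω ih =>
    change cs.projSimple i ∘ cs.projWord (ω ++ ω') = cs.projSimple i ∘ cs.projWord ω ∘ _
    rw [ih]

theorem projWord_alternatingWord_two_mul (a b : B) (n : ℕ) :
    cs.projWord (alternatingWord a b (2 * n)) = (cs.projSimple a ∘ cs.projSimple b)^[n] := by
  induction n with
  | zero => rfl
  | succ n ih =>
    rw [alternatingWord_two_mul_succ, Function.iterate_succ', ← ih]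
    rfl

theorem projWord_alternatingWord_two_mul_add_one (a b : B) (n : ℕ) :
    cs.projWord (alternatingWord a b (2 * n + 1)) =
      cs.projSimple b ∘ (cs.projSimple a ∘ cs.projSimple b)^[n] := by
  rw [alternatingWord_succ', if_pos (even_two_mul n), ← projWord_alternatingWord_two_mul]
  rfl

theorem IsMinimalInLeftCoset.projWord_eq_self {I : Set B} {u : W}
    (hu : cs.IsMinimalInLeftCoset I u) {ω : List B} (hω : ∀ i ∈ ω, i ∈ I) :
    cs.projWord ω u = u := by
  induction ω with
  | nil => rfl
  | cons i ω ih =>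
    change cs.projSimple i (cs.projWord ω u) = u
    rw [ih fun j hj => hω j (mem_cons_of_mem _ hj)]
    refine cs.projSimple_of_not_isRightDescent (not_lt.mpr ?_)
    simpa using hu [i] (by simpa using hω i mem_cons_self)

theorem IsMinimalInLeftCoset.exists_projSimple_eq {I : Set B} {u : W}
    (hu : cs.IsMinimalInLeftCoset I u) {β : List B} (hβ : ∀ i ∈ β, i ∈ I)
    (hadd : ℓ (u * π β) = ℓ u + β.length) {i : B} (hi : i ∈ I) :
    ∃ β' : List B, (∀ j ∈ β', j ∈ I) ∧ ℓ (u * π β') = ℓ u + β'.length ∧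
      ¬cs.IsRightDescent (u * π β') i ∧ cs.projSimple i (u * π β) = u * π β' := by
  by_cases hdesc : cs.IsRightDescent (u * π β) i
  · obtain ⟨j, hj, hexch⟩ := hu.exists_eraseIdx cs hβ hi hdesc
    refine ⟨β.eraseIdx j, fun x hx => hβ x (mem_of_mem_eraseIdx hx), ?_, ?_, ?_⟩
    · have := length_eraseIdx_add_one hj
      have := cs.isRightDescent_iff.mp hdesc
      rw [← hexch]
      omega
    · rwa [← hexch, ← isRightDescent_iff_not_isRightDescent_mul]
    · rw [projSimple_of_isRightDescent cs hdesc, hexch]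
  · exact ⟨β, hβ, hadd, hdesc, cs.projSimple_of_not_isRightDescent hdesc⟩

theorem eq_alternatingWord_of_not_isRightDescent {a b : B} {u : W} {β : List B}
    (hβ : ∀ x ∈ β, x ∈ ({a, b} : Set B)) (hadd : ℓ (u * π β) = ℓ u + β.length)
    (ha : ¬cs.IsRightDescent (u * π β) a) : β = alternatingWord a b β.length := by
  induction β using List.reverseRecOn generalizing a b with
  | nil => rfl
  | append_singleton β x ih =>
    obtain rfl : x = b := (hβ x (by simp)).resolve_left <| by
      rintro rfl
      exact ha (cs.isRightDescent_mul_wordProd_append_singleton hadd)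
    have hx : ¬cs.IsRightDescent (u * π β) x := by
      rw [IsRightDescent, mul_assoc, ← wordProd_singleton, ← wordProd_append, hadd,
        cs.length_mul_wordProd_of_append hadd, length_append, length_singleton]
      omega
    have hshape := ih (fun y hy => Set.pair_comm a x ▸ hβ y (mem_append_left _ hy))
      (cs.length_mul_wordProd_of_append hadd) hx
    rw [length_append, length_singleton, alternatingWord_succ, concat_eq_append, ← hshape]

theorem lt_of_not_isRightDescent_alternatingWord {a b : B} (hab : M a b ≠ 0) {u : W} {k : ℕ}
    (hadd : ℓ (u * π (alternatingWord a b k)) = ℓ u + k)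
    (ha : ¬cs.IsRightDescent (u * π (alternatingWord a b k)) a) : k < M a b := by
  have hred : cs.IsReduced (alternatingWord a b k) := by
    have := cs.length_mul_le u (π (alternatingWord a b k))
    have := cs.length_wordProd_le (alternatingWord a b k)
    rw [length_alternatingWord] at this
    rw [IsReduced, length_alternatingWord]
    omega
  have hle : k ≤ M a b := not_lt.mp fun h => cs.not_isReduced_alternatingWord a b hab h hred
  refine lt_of_le_of_ne hle fun hk => ha ?_
  subst hk
  obtain ⟨m, hm⟩ := Nat.exists_eq_succ_of_ne_zero hab
  have hbraid : π (alternatingWord a b (m + 1)) = π (alternatingWord a b m) * s a := by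
    have := cs.wordProd_braidWord_eq a b
    rw [braidWord, braidWord, ← M.symmetric a b, hm] at this
    rw [this, alternatingWord_succ, wordProd_concat]
  have := cs.length_mul_wordProd_le u (alternatingWord a b m)
  rw [length_alternatingWord] at this
  rw [hm] at hadd ⊢
  rw [IsRightDescent, hadd, hbraid, ← mul_assoc, simple_mul_simple_cancel_right]
  omega

theorem IsMinimalInLeftCoset.projWord_alternatingWord_mul {I : Set B} {a b : B} {u : W}
    (hu : cs.IsMinimalInLeftCoset I u) (ha : a ∈ I) (hb : b ∈ I) {k n : ℕ} (hkn : k ≤ n)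
    (hadd : ℓ (u * π (alternatingWord a b k)) = ℓ u + k) :
    cs.projWord (alternatingWord a b n) (u * π (alternatingWord a b k)) = u := by
  induction k generalizing a b n with
  | zero =>
    rw [alternatingWord, wordProd_nil, mul_one]
    exact hu.projWord_eq_self cs (forall_mem_alternatingWord ha hb n)
  | succ k ih =>
    obtain ⟨n, rfl⟩ : ∃ n', n = n' + 1 := ⟨n - 1, by omega⟩
    have hadd' : ℓ (u * π (alternatingWord b a k ++ [b])) =
        ℓ u + (alternatingWord b a k ++ [b]).length := by
      simpa [alternatingWord_succ] using hadd
    rw [alternatingWord_succ, alternatingWord_succ, concat_eq_append, concat_eq_append,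
      projWord_append, Function.comp_apply, projWord_singleton,
      cs.projSimple_of_isRightDescent (cs.isRightDescent_mul_wordProd_append_singleton hadd'),
      wordProd_append, wordProd_singleton, ← mul_assoc, simple_mul_simple_cancel_right]
    exact ih hb ha (by omega) (by simpa using cs.length_mul_wordProd_of_append hadd')

theorem IsMinimalInLeftCoset.projWord_braidWord_mul {a b : B} (hab : M a b ≠ 0) {u : W}
    (hu : cs.IsMinimalInLeftCoset {a, b} u) {β : List B} (hβ : ∀ i ∈ β, i ∈ ({a, b} : Set B))
    (hadd : ℓ (u * π β) = ℓ u + β.length) :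
    cs.projWord (braidWord M a b) (u * π β) = u := by
  obtain ⟨m, hm⟩ := Nat.exists_eq_succ_of_ne_zero hab
  obtain ⟨β', hβ', hadd', hb, hproj⟩ := hu.exists_projSimple_eq cs hβ hadd (i := b) (by simp)
  have hshape := cs.eq_alternatingWord_of_not_isRightDescent
    (fun x hx => Set.pair_comm a b ▸ hβ' x hx) hadd' hb
  generalize β'.length = k at hshape
  subst hshape
  rw [length_alternatingWord] at hadd'
  have hlt := cs.lt_of_not_isRightDescent_alternatingWord (by rwa [M.symmetric] at hab) hadd' hb
  rw [← M.symmetric, hm] at hlt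
  rw [braidWord, hm, alternatingWord_succ, concat_eq_append, projWord_append, Function.comp_apply,
    projWord_singleton, hproj]
  exact hu.projWord_alternatingWord_mul cs (by simp) (by simp) (by omega) hadd'

theorem projWord_braidWord_eq {a b : B} (hab : M a b ≠ 0) :
    cs.projWord (braidWord M a b) = cs.projWord (braidWord M b a) := by
  funext w
  obtain ⟨u, β, hu, hβ, hadd, rfl⟩ := cs.exists_isMinimalInLeftCoset_mul {a, b} w
  rw [Set.pair_comm] at hu hβ
  rw [hu.projWord_braidWord_mul cs (by rwa [M.symmetric] at hab) hβ hadd]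
  rw [Set.pair_comm] at hu hβ
  exact hu.projWord_braidWord_mul cs hab hβ hadd

end CoxeterSystem

theorem stmt_10 (cs : CoxeterSystem M W) (s t : B) (hfin : M s t ≠ 0) :
    (Even (M s t) →
      (cs.projSimple s ∘ cs.projSimple t)^[M s t / 2] =
      (cs.projSimple t ∘ cs.projSimple s)^[M s t / 2]) ∧
    (Odd (M s t) →
      cs.projSimple t ∘ (cs.projSimple s ∘ cs.projSimple t)^[(M s t - 1) / 2] =
      cs.projSimple s ∘ (cs.projSimple t ∘ cs.projSimple s)^[(M s t - 1) / 2]) := by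
  have hbraid := cs.projWord_braidWord_eq hfin
  rw [braidWord, braidWord, M.symmetric t s] at hbraid
  refine ⟨fun ⟨r, hr⟩ => ?_, fun ⟨r, hr⟩ => ?_⟩
  · rw [hr, ← two_mul] at hbraid ⊢
    rw [Nat.mul_div_cancel_left r two_pos]
    simpa only [projWord_alternatingWord_two_mul] using hbraid
  · rw [hr] at hbraid ⊢
    rw [Nat.add_sub_cancel, Nat.mul_div_cancel_left r two_pos]
    simpa only [projWord_alternatingWord_two_mul_add_one] using hbraid
end
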